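/- Let n > 0, k a positive integer, and λ_1 ≤ ... ≤ λ_{k+1} positive reals such that for every m ≤ k the inequality ∑_{i=1}^m (λ_{m+1} - λ_i)² ≤ (4/n) ∑_{i=1}^m (λ_{m+1} - λ_i) λ_i holds. Then λ_{k+1} - λ_k ≤ 2 sqrt( ((2/(kn)) ∑_{i=1}^k λ_i)² - (1/k)(1 + 4/n) ∑_{j=1}^k (λ_j - (1/k)∑_{i=1}^k λ_i)² ). -/

import Mathlib

/-!
Expanding the squares, Yang's inequality at level `m` says exactly that `P(λ_{m+1}) ≤ 0` for the
quadratic `P(x) = m x² - (2 + 4/n) (∑ λ_i) x + (1 + 4/n) ∑ λ_i²` built from `λ_1, …, λ_m`.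
At level `k` this gives `P(λ_{k+1}) ≤ 0`; at level `k - 1` it gives `P(λ_k) ≤ 0`, because the extra
summand `i = k` vanishes at `x = λ_k`. Two points where an upward parabola is nonpositive lie between
its roots, so their distance is at most `√(discrim P) / k`, and `discrim P = (2k)² E` where `E` is the
radicand of the statement (the sum of squared deviations is `∑ λ_i² - (∑ λ_i)² / k`).
-/

open Finset

lemma sub_le_sqrt_discrim_div {a b c x y : ℝ} (ha : 0 < a)
    (hx : a * (x * x) + b * x + c ≤ 0) (hy : a * (y * y) + b * y + c ≤ 0) :
    x - y ≤ √(discrim a b c) / a := by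
  have hsq : (a * (x - y)) ^ 2 ≤ discrim a b c := by
    rw [discrim]
    nlinarith [sq_nonneg (a * (x + y) + b), mul_le_mul_of_nonneg_left hx ha.le,
      mul_le_mul_of_nonneg_left hy ha.le]
  rw [le_div_iff₀ ha, mul_comm]
  exact (le_abs_self _).trans (Real.abs_le_sqrt hsq)

section Sums

variable {ι : Type*} (s : Finset ι) (f : ι → ℝ) (x : ℝ)

lemma sum_sub_sq_eq :
    ∑ i ∈ s, (x - f i) ^ 2 = #s * x ^ 2 - 2 * x * ∑ i ∈ s, f i + ∑ i ∈ s, f i ^ 2 := by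
  simp only [sub_sq, sum_add_distrib, sum_sub_distrib, sum_const, nsmul_eq_mul, ← mul_sum]

lemma sum_sub_mul_eq :
    ∑ i ∈ s, (x - f i) * f i = x * ∑ i ∈ s, f i - ∑ i ∈ s, f i ^ 2 := by
  simp only [sub_mul, sum_sub_distrib, ← mul_sum, sq]

variable {s f x}

lemma quadratic_nonpos_of_sum_sub_sq_le {c : ℝ}
    (h : ∑ i ∈ s, (x - f i) ^ 2 ≤ c * ∑ i ∈ s, (x - f i) * f i) :
    (#s : ℝ) * (x * x) + -((2 + c) * ∑ i ∈ s, f i) * x + (1 + c) * ∑ i ∈ s, f i ^ 2 ≤ 0 := by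
  rw [sum_sub_sq_eq, sum_sub_mul_eq] at h
  linear_combination h

end Sums

lemma sum_Icc_sub_sq_le_of_pred {c : ℝ} {lam : ℕ → ℝ} {k : ℕ} (hk : 0 < k)
    (hyang : ∀ m, 1 ≤ m → m ≤ k →
      ∑ i ∈ Icc 1 m, (lam (m + 1) - lam i) ^ 2 ≤ c * ∑ i ∈ Icc 1 m, (lam (m + 1) - lam i) * lam i) :
    ∑ i ∈ Icc 1 k, (lam k - lam i) ^ 2 ≤ c * ∑ i ∈ Icc 1 k, (lam k - lam i) * lam i := by
  obtain ⟨m, rfl⟩ := Nat.exists_eq_add_one_of_ne_zero hk.ne'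
  rw [sum_Icc_succ_top (by omega), sum_Icc_succ_top (by omega)]
  simp only [sub_self, zero_mul, add_zero, zero_pow two_ne_zero]
  rcases Nat.eq_zero_or_pos m with rfl | hm
  · simp
  · exact hyang m hm (by omega)

lemma discrim_eq_sq_mul_variance (k n S Q : ℝ) (hk : k ≠ 0) :
    discrim k (-((2 + 4 / n) * S)) ((1 + 4 / n) * Q)
      = (2 * k) ^ 2 * (((2 / (k * n)) * S) ^ 2 - (1 / k) * (1 + 4 / n) * (Q - S ^ 2 / k)) := by
  rw [discrim]
  field_simp
  ring

theorem stmt_5_general (n : ℝ) (k : ℕ) (lam : ℕ → ℝ)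
    (hk : 0 < k)
    (hyang : ∀ m, 1 ≤ m → m ≤ k →
      ∑ i ∈ Finset.Icc 1 m, (lam (m+1) - lam i)^2 ≤
        (4/n) * ∑ i ∈ Finset.Icc 1 m, (lam (m+1) - lam i) * lam i) :
    lam (k+1) - lam k ≤ 2 * Real.sqrt (((2/((k:ℝ)*n)) * ∑ i ∈ Finset.Icc 1 k, lam i)^2
        - (1/(k:ℝ)) * (1 + 4/n) *
          ∑ j ∈ Finset.Icc 1 k, (lam j - (1/(k:ℝ)) * ∑ i ∈ Finset.Icc 1 k, lam i)^2) := by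
  have hk₀ : (0 : ℝ) < k := by exact_mod_cast hk
  have hcard : (#(Icc 1 k) : ℝ) = k := by simp
  have hnext := quadratic_nonpos_of_sum_sub_sq_le (hyang k hk le_rfl)
  have hlast := quadratic_nonpos_of_sum_sub_sq_le (sum_Icc_sub_sq_le_of_pred hk hyang)
  rw [hcard] at hnext hlast
  have hvar : ∑ j ∈ Icc 1 k, (lam j - (1 / (k : ℝ)) * ∑ i ∈ Icc 1 k, lam i) ^ 2
      = ∑ i ∈ Icc 1 k, lam i ^ 2 - (∑ i ∈ Icc 1 k, lam i) ^ 2 / k := by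
    simp_rw [sub_sq_comm (lam _), sum_sub_sq_eq, hcard]
    field_simp
    ring
  calc lam (k + 1) - lam k ≤ _ / (k : ℝ) := sub_le_sqrt_discrim_div hk₀ hnext hlast
    _ = _ := by
      rw [discrim_eq_sq_mul_variance _ _ _ _ hk₀.ne', Real.sqrt_mul (sq_nonneg _),
        Real.sqrt_sq (by positivity), hvar]
      field_simp

theorem stmt_5 (n : ℝ) (k : ℕ) (lam : ℕ → ℝ)
    (hn : 0 < n) (hk : 0 < k)
    (hpos : ∀ i ∈ Finset.Icc 1 (k+1), 0 < lam i)
    (hmono : ∀ i j, 1 ≤ i → i ≤ j → j ≤ k+1 → lam i ≤ lam j)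
    (hyang : ∀ m, 1 ≤ m → m ≤ k →
      ∑ i ∈ Finset.Icc 1 m, (lam (m+1) - lam i)^2 ≤
        (4/n) * ∑ i ∈ Finset.Icc 1 m, (lam (m+1) - lam i) * lam i) :
    lam (k+1) - lam k ≤ 2 * Real.sqrt (((2/((k:ℝ)*n)) * ∑ i ∈ Finset.Icc 1 k, lam i)^2
        - (1/(k:ℝ)) * (1 + 4/n) *
          ∑ j ∈ Finset.Icc 1 k, (lam j - (1/(k:ℝ)) * ∑ i ∈ Finset.Icc 1 k, lam i)^2) :=
  stmt_5_general n k lam hk hyang
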